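/- There exists an absolute constant C > 0 such that the following holds. Let ξ be a random variable on a probability space (Ω, 𝓕, P) with E[ξ²] < ∞, let 𝓖 ⊆ 𝓕 be a sub-σ-algebra with E[ξ | 𝓖] = 0 almost surely, and define ẽ_λ = λ² E[ξ² 1{|λξ| > 1} | 𝓖] + λ³ E[|ξ|³ 1{|λξ| ≤ 1} | 𝓖]. Then for all λ > 0 and all τ ∈ [1/8, 2], almost surely | E[ e^{λξ − τ λ² ξ²} | 𝓖 ] − 1 − (1/2 − τ) λ² E[ξ² | 𝓖] | ≤ C ẽ_λ. -/

import Mathlib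

open MeasureTheory Filter
open scoped Topology ENNReal

/-- `ζ = λξ − λ²ξ²/2`. -/
noncomputable def zetaOf {Ω : Type} (lam : ℝ) (ξ : Ω → ℝ) : Ω → ℝ :=
  fun ω => lam * ξ ω - lam ^ 2 * (ξ ω) ^ 2 / 2

/-- `ẽ_λ = λ² E[ξ² 1{|λξ| > 1} | 𝓖] + λ³ E[|ξ|³ 1{|λξ| ≤ 1} | 𝓖]`,
where `𝓖 = mG` is a sub-σ-algebra. -/
noncomputable def tildeEps {Ω : Type} (mG : MeasurableSpace Ω) [mF : MeasurableSpace Ω]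
    (P : Measure Ω) (lam : ℝ) (ξ : Ω → ℝ) : Ω → ℝ :=
  fun ω =>
    lam ^ 2 * (P[fun ω' => if 1 < |lam * ξ ω'| then (ξ ω') ^ 2 else 0|mG]) ω +
      lam ^ 3 * (P[fun ω' => if |lam * ξ ω'| ≤ 1 then |ξ ω'| ^ 3 else 0|mG]) ω

/-! With `u = λξ`, the function `exp (u - τu²)` is bounded by `e^{1/(4τ)} ≤ 8` and agrees with
its second-order Taylor polynomial `1 + u + (1/2 - τ)u²` up to `O(|u|³)` for `|u| ≤ 1`, so the
difference is `O(u² 1{|u| > 1} + |u|³ 1{|u| ≤ 1})` pointwise. Conditional expectation is linear and monotone, and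
the linear term `λ E[ξ | 𝓖]` vanishes. -/

open Real

lemma exp_sub_mul_sq_le_eight {τ : ℝ} (hτ : 1 / 8 ≤ τ) (u : ℝ) : exp (u - τ * u ^ 2) ≤ 8 := by
  have h2 : u - τ * u ^ 2 ≤ 2 := by nlinarith [sq_nonneg (2 * τ * u - 1), sq_nonneg u]
  have he : exp 2 = exp 1 * exp 1 := by rw [← exp_add]; norm_num
  nlinarith [exp_le_exp.2 h2, exp_one_lt_d9, exp_pos 1]

lemma abs_exp_sub_quadratic_le {τ : ℝ} (hτ₁ : 1 / 8 ≤ τ) (hτ₂ : τ ≤ 2) (u : ℝ) :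
    |exp (u - τ * u ^ 2) - 1 - u - (1 / 2 - τ) * u ^ 2| ≤ 9 + |u| + 2 * u ^ 2 := by
  have h8 := exp_sub_mul_sq_le_eight hτ₁ u
  have hpos := exp_pos (u - τ * u ^ 2)
  rw [abs_le]
  constructor <;> nlinarith [le_abs_self u, neg_le_abs u, sq_nonneg u]

lemma abs_exp_sub_quadratic_le_cube {τ u : ℝ} (hτ₁ : 1 / 8 ≤ τ) (hτ₂ : τ ≤ 2)
    (hu : |u| ≤ 1 / 3) :
    |exp (u - τ * u ^ 2) - 1 - u - (1 / 2 - τ) * u ^ 2| ≤ 6 * |u| ^ 3 := by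
  set z := u - τ * u ^ 2
  have hu3 : 0 ≤ |u| ^ 3 := by positivity
  have hz : |z| ≤ 2 * |u| := by
    calc |z| ≤ |u| + |τ * u ^ 2| := abs_sub u (τ * u ^ 2)
      _ = |u| + τ * |u| ^ 2 := by rw [abs_mul, abs_of_pos (a := τ) (by linarith), abs_pow]
      _ ≤ 2 * |u| := by nlinarith [abs_nonneg u]
  have hexp : |exp z - (1 + z + z ^ 2 / 2)| ≤ 2 * |u| ^ 3 := by
    have hb := Real.exp_bound (x := z) (by linarith) (n := 3) (by norm_num)
    norm_num [Finset.sum_range_succ, Nat.factorial, ← add_assoc] at hb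
    have : |z| ^ 3 ≤ (2 * |u|) ^ 3 := pow_le_pow_left₀ (abs_nonneg z) hz 3
    rw [mul_pow] at this
    linarith
  have hpoly : |(1 + z + z ^ 2 / 2) - (1 + u + (1 / 2 - τ) * u ^ 2)| ≤ 4 * |u| ^ 3 := by
    have hτ : τ ^ 2 ≤ 2 ^ 2 := by nlinarith
    have hu4 : |u| ^ 4 ≤ |u| ^ 3 / 3 := by
      rw [pow_succ]; nlinarith [pow_nonneg (abs_nonneg u) 3]
    calc |(1 + z + z ^ 2 / 2) - (1 + u + (1 / 2 - τ) * u ^ 2)|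
        = |τ ^ 2 * u ^ 4 / 2 - τ * u ^ 3| := by simp only [z]; ring_nf
      _ ≤ τ ^ 2 * |u| ^ 4 / 2 + τ * |u| ^ 3 := by
          refine (abs_sub _ _).trans_eq ?_
          rw [abs_div, abs_mul, abs_mul, abs_pow, abs_pow, abs_pow, sq_abs, abs_two,
            abs_of_pos (by linarith : 0 < τ)]
      _ ≤ 2 ^ 2 * (|u| ^ 3 / 3) / 2 + 2 * |u| ^ 3 := by gcongr
      _ ≤ 4 * |u| ^ 3 := by linarith
  calc |exp z - 1 - u - (1 / 2 - τ) * u ^ 2|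
      = |(exp z - (1 + z + z ^ 2 / 2)) +
          ((1 + z + z ^ 2 / 2) - (1 + u + (1 / 2 - τ) * u ^ 2))| := by ring_nf
    _ ≤ _ := abs_add_le _ _
    _ ≤ 6 * |u| ^ 3 := by linarith

lemma abs_exp_sub_quadratic_le_tail {τ : ℝ} (hτ₁ : 1 / 8 ≤ τ) (hτ₂ : τ ≤ 2) (u : ℝ) :
    |exp (u - τ * u ^ 2) - 1 - u - (1 / 2 - τ) * u ^ 2| ≤
      400 * ((if 1 < |u| then u ^ 2 else 0) + (if |u| ≤ 1 then |u| ^ 3 else 0)) := by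
  have hcrude := abs_exp_sub_quadratic_le hτ₁ hτ₂ u
  have hsq : |u| ^ 2 = u ^ 2 := sq_abs u
  rcases le_or_gt |u| 1 with hu | hu
  · rw [if_neg hu.not_gt, if_pos hu, zero_add]
    rcases le_or_gt |u| (1 / 3) with hsmall | hmid
    · linarith [abs_exp_sub_quadratic_le_cube hτ₁ hτ₂ hsmall, pow_nonneg (abs_nonneg u) 3]
    · have : (1 / 3 : ℝ) ^ 3 ≤ |u| ^ 3 := pow_le_pow_left₀ (by norm_num) hmid.le 3
      nlinarith
  · rw [if_pos hu, if_neg hu.not_ge, add_zero]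
    nlinarith

lemma abs_exp_sub_quadratic_le_scaled {τ lam : ℝ} (hτ₁ : 1 / 8 ≤ τ) (hτ₂ : τ ≤ 2)
    (hlam : 0 < lam) (x : ℝ) :
    |exp (lam * x - τ * lam ^ 2 * x ^ 2) - (1 + (lam * x + (1 / 2 - τ) * lam ^ 2 * x ^ 2))| ≤
      400 * lam ^ 2 * (if 1 < |lam * x| then x ^ 2 else 0) +
        400 * lam ^ 3 * (if |lam * x| ≤ 1 then |x| ^ 3 else 0) := by
  have h := abs_exp_sub_quadratic_le_tail hτ₁ hτ₂ (lam * x)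
  rw [abs_mul lam x, abs_of_pos hlam] at h ⊢
  convert h using 2
  · ring_nf
  · split_ifs <;> ring

section CondExp

variable {Ω : Type*} {m m₀ : MeasurableSpace Ω} {μ : Measure Ω} {f g b : Ω → ℝ}

lemma ae_abs_condExp_sub_le (hf : Integrable f μ) (hg : Integrable g μ) (hb : Integrable b μ)
    (hfg : ∀ᵐ ω ∂μ, |f ω - g ω| ≤ b ω) :
    ∀ᵐ ω ∂μ, |μ[f|m] ω - μ[g|m] ω| ≤ μ[b|m] ω := by
  filter_upwards [condExp_sub hf hg m, abs_condExp_ae_le_condExp_abs (m := m) (f - g),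
    condExp_mono (m := m) (hf.sub hg).abs hb hfg] with ω hsub habs hmono
  rw [← Pi.sub_apply, ← hsub]
  exact habs.trans hmono

lemma condExp_mul_add_mul (hf : Integrable f μ) (hg : Integrable g μ) (a c : ℝ) :
    μ[fun ω => a * f ω + c * g ω|m] =ᵐ[μ] fun ω => a * μ[f|m] ω + c * μ[g|m] ω := by
  filter_upwards [condExp_add (hf.const_mul a) (hg.const_mul c) m, condExp_smul a f m,
    condExp_smul c g m] with ω hadd hf' hg'
  exact hadd.trans (congrArg₂ (· + ·) hf' hg')

lemma condExp_const_add [IsFiniteMeasure μ] (hm : m ≤ m₀) (hf : Integrable f μ) (a : ℝ) :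
    μ[fun ω => a + f ω|m] =ᵐ[μ] fun ω => a + μ[f|m] ω := by
  filter_upwards [condExp_add (integrable_const a) hf m] with ω hadd
  rw [condExp_const hm] at hadd
  exact hadd

end CondExp

section Integrability

variable {Ω : Type*} [MeasurableSpace Ω] {μ : Measure Ω} {ξ : Ω → ℝ}

lemma integrable_of_integrable_sq [IsFiniteMeasure μ] (hξ : AEStronglyMeasurable ξ μ)
    (hξ2 : Integrable (fun ω => ξ ω ^ 2) μ) : Integrable ξ μ :=
  ((memLp_two_iff_integrable_sq hξ).2 hξ2).integrable one_le_two

lemma integrable_ite_one_lt_abs_mul (hξ : Measurable ξ) (hξ2 : Integrable (fun ω => ξ ω ^ 2) μ)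
    (lam : ℝ) : Integrable (fun ω => if 1 < |lam * ξ ω| then ξ ω ^ 2 else 0) μ := by
  refine hξ2.mono' ?_ (ae_of_all _ fun ω => ?_)
  · exact (Measurable.ite (measurableSet_lt measurable_const (hξ.const_mul lam).abs)
      (hξ.pow_const 2) measurable_const).aestronglyMeasurable
  · split_ifs <;> simp [sq_nonneg]

lemma integrable_ite_abs_mul_le_one (hξ : Measurable ξ) (hξ2 : Integrable (fun ω => ξ ω ^ 2) μ)
    {lam : ℝ} (hlam : 0 < lam) :
    Integrable (fun ω => if |lam * ξ ω| ≤ 1 then |ξ ω| ^ 3 else 0) μ := by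
  refine (hξ2.const_mul lam⁻¹).mono' ?_ (ae_of_all _ fun ω => ?_)
  · exact (Measurable.ite (measurableSet_le (hξ.const_mul lam).abs measurable_const)
      (hξ.abs.pow_const 3) measurable_const).aestronglyMeasurable
  · split_ifs with h
    · rw [abs_mul, abs_of_pos hlam] at h
      have hx : |ξ ω| ≤ lam⁻¹ := by rw [← one_div, le_div_iff₀' hlam]; exact h
      rw [Real.norm_of_nonneg (by positivity), ← sq_abs (ξ ω), pow_succ, mul_comm lam⁻¹]
      exact mul_le_mul_of_nonneg_left hx (by positivity)
    · simp only [norm_zero]; positivity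

lemma integrable_exp_sub_mul_sq [IsFiniteMeasure μ] (hξ : Measurable ξ) {τ : ℝ} (hτ : 1 / 8 ≤ τ)
    (lam : ℝ) : Integrable (fun ω => exp (lam * ξ ω - τ * lam ^ 2 * ξ ω ^ 2)) μ := by
  refine Integrable.of_bound (by fun_prop) 8 (ae_of_all _ fun ω => ?_)
  rw [Real.norm_of_nonneg (exp_pos _).le]
  convert exp_sub_mul_sq_le_eight hτ (lam * ξ ω) using 2
  ring

end Integrability

/-- Lemma 3.1: for `λ > 0` and `τ ∈ [1/8, 2]`,
`E[e^{λξ − τλ²ξ²} | 𝓖] = 1 + (1/2 − τ)λ² E[ξ² | 𝓖] + O(1) ẽ_λ` a.s. -/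
theorem condExp_exp_expansion :
    ∃ C : ℝ, 0 < C ∧
      ∀ (Ω : Type) (mG : MeasurableSpace Ω) [mF : MeasurableSpace Ω] (P : Measure Ω),
        IsProbabilityMeasure P → mG ≤ mF →
          ∀ ξ : Ω → ℝ, Measurable ξ →
            Integrable (fun ω => (ξ ω) ^ 2) P →
            P[ξ|mG] =ᵐ[P] 0 →
            ∀ lam : ℝ, 0 < lam → ∀ τ : ℝ, 1 / 8 ≤ τ → τ ≤ 2 →
              ∀ᵐ ω ∂P,
                |(P[fun ω' => Real.exp (lam * ξ ω' - τ * lam ^ 2 * (ξ ω') ^ 2)|mG]) ω - 1 -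
                      (1 / 2 - τ) * lam ^ 2 * (P[fun ω' => (ξ ω') ^ 2|mG]) ω| ≤
                  C * tildeEps mG P lam ξ ω := by
  refine ⟨400, by norm_num, fun Ω mG mF P _ hm ξ hξ hξ2 hξ0 lam hlam τ hτ₁ hτ₂ => ?_⟩
  have hξ1 : Integrable ξ P := integrable_of_integrable_sq hξ.aestronglyMeasurable hξ2
  have hquad := (hξ1.const_mul lam).add (hξ2.const_mul ((1 / 2 - τ) * lam ^ 2))
  have hlarge := integrable_ite_one_lt_abs_mul hξ hξ2 lam
  have hsmall := integrable_ite_abs_mul_le_one hξ hξ2 hlam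
  filter_upwards [ae_abs_condExp_sub_le (m := mG)
      (g := fun ω => 1 + (lam * ξ ω + (1 / 2 - τ) * lam ^ 2 * ξ ω ^ 2))
      (b := fun ω => 400 * lam ^ 2 * (if 1 < |lam * ξ ω| then ξ ω ^ 2 else 0) +
        400 * lam ^ 3 * (if |lam * ξ ω| ≤ 1 then |ξ ω| ^ 3 else 0))
      (integrable_exp_sub_mul_sq hξ hτ₁ lam) ((integrable_const 1).add hquad)
      ((hlarge.const_mul _).add (hsmall.const_mul _))
      (ae_of_all _ fun ω => abs_exp_sub_quadratic_le_scaled hτ₁ hτ₂ hlam (ξ ω)),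
    condExp_const_add (f := fun ω => lam * ξ ω + (1 / 2 - τ) * lam ^ 2 * ξ ω ^ 2) hm hquad 1,
    condExp_mul_add_mul (m := mG) hξ1 hξ2 lam ((1 / 2 - τ) * lam ^ 2),
    condExp_mul_add_mul (m := mG) hlarge hsmall (400 * lam ^ 2) (400 * lam ^ 3), hξ0]
    with ω hbound hconst hlin htail hzero
  rw [hconst, hlin, htail, hzero, Pi.zero_apply, mul_zero, zero_add] at hbound
  convert hbound using 2
  · ring
  · simp only [tildeEps]; ring
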